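/- Let F be a finite Frobenius group with abelian complement H and |H| > 2, and suppose that the natural (faithful) action of F on the set of right cosets of H is 2-closed, i.e., the image of F in Sym(F/H) equals its own 2-closure. Then the inner holomorph of F, namely the subgroup F_L·F_R of Sym(F), is 3-closed. -/

import Mathlib

open Equiv Pointwise

section PermGroupDefs

variable {Y : Type*}

/-- A subgroup of `Equiv.Perm Y` is transitive if it acts transitively on `Y`. -/
def SubTrans (G : Subgroup (Equiv.Perm Y)) : Prop :=
  ∀ x y : Y, ∃ g ∈ G, g x = y

/-- A subgroup of `Equiv.Perm Y` is semiregular if only its identity fixes a point. -/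
def SubSemiregular (H : Subgroup (Equiv.Perm Y)) : Prop :=
  ∀ h ∈ H, (∃ x : Y, h x = x) → h = 1

/-- A subgroup of `Equiv.Perm Y` is regular if it is transitive and semiregular. -/
def SubRegular (H : Subgroup (Equiv.Perm Y)) : Prop :=
  SubTrans H ∧ SubSemiregular H

/-- Two-transitivity. -/
def Sub2Trans (G : Subgroup (Equiv.Perm Y)) : Prop :=
  ∀ x₁ x₂ y₁ y₂ : Y, x₁ ≠ x₂ → y₁ ≠ y₂ → ∃ g ∈ G, g x₁ = y₁ ∧ g x₂ = y₂

/-- Orbit of a point under a subgroup of `Equiv.Perm Y`. -/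
def SubOrbit (H : Subgroup (Equiv.Perm Y)) (x : Y) : Set Y :=
  {y | ∃ h ∈ H, h x = y}

/-- The set of orbits of a subgroup of `Equiv.Perm Y`. -/
def SubOrbits (H : Subgroup (Equiv.Perm Y)) : Set (Set Y) :=
  Set.range (SubOrbit H)

/-- A block for a subgroup of `Equiv.Perm Y`. -/
def SubIsBlock (G : Subgroup (Equiv.Perm Y)) (B : Set Y) : Prop :=
  ∀ g ∈ G, (g : Equiv.Perm Y) '' B = B ∨ Disjoint ((g : Equiv.Perm Y) '' B) B

/-- Primitivity: transitive and the only blocks are trivial. -/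
def SubPrimitive (G : Subgroup (Equiv.Perm Y)) : Prop :=
  SubTrans G ∧ ∀ B : Set Y, B.Nonempty → SubIsBlock G B → B = Set.univ ∨ ∃ x, B = {x}

/-- A block system: a `G`-invariant partition of `Y`. -/
def IsBlockSystem (G : Subgroup (Equiv.Perm Y)) (P : Set (Set Y)) : Prop :=
  (∀ B ∈ P, B.Nonempty) ∧ (∀ x : Y, ∃! B : Set Y, B ∈ P ∧ x ∈ B) ∧
    (∀ g ∈ G, ∀ B ∈ P, (g : Equiv.Perm Y) '' B ∈ P)

/-- A normal block system: the set of orbits of a normal subgroup. -/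
def IsNormalBlockSystem (G : Subgroup (Equiv.Perm Y)) (P : Set (Set Y)) : Prop :=
  IsBlockSystem G P ∧
    ∃ N : Subgroup (Equiv.Perm Y), N ≤ G ∧ (∀ g ∈ G, ∀ x ∈ N, g * x * g⁻¹ ∈ N) ∧
      P = SubOrbits N

/-- `P` refines `Q`: every block of `P` is contained in a block of `Q`. -/
def Refines (P Q : Set (Set Y)) : Prop :=
  ∀ B ∈ P, ∃ C ∈ Q, B ⊆ C

/-- The partition of `Y` into singletons. -/
def SingletonPartition (Y : Type*) : Set (Set Y) :=
  Set.range fun x : Y => ({x} : Set Y)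

/-- A minimal (nontrivial) block system. -/
def IsMinimalBlockSystem (G : Subgroup (Equiv.Perm Y)) (P : Set (Set Y)) : Prop :=
  IsBlockSystem G P ∧ P ≠ SingletonPartition Y ∧
    ∀ Q : Set (Set Y), IsBlockSystem G Q → Refines Q P →
      Q = SingletonPartition Y ∨ Q = P

/-- `fix_G(P)`: elements of `G` stabilizing every block of `P` setwise. -/
def FixBlocks (G : Subgroup (Equiv.Perm Y)) (P : Set (Set Y)) : Subgroup (Equiv.Perm Y) :=
  G ⊓ ⨅ B ∈ P, MulAction.stabilizer (Equiv.Perm Y) B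

/-- The pointwise stabilizer of a set, inside the full symmetric group. -/
def PointStab (A : Set Y) : Subgroup (Equiv.Perm Y) :=
  ⨅ a ∈ A, MulAction.stabilizer (Equiv.Perm Y) a

/-- The support of a subgroup of `Equiv.Perm Y`. -/
def SubSupp (H : Subgroup (Equiv.Perm Y)) : Set Y :=
  {y | ∃ h ∈ H, h y ≠ y}

/-- `N` is a normal subgroup of the subgroup `H`. -/
def NormalIn {G : Type*} [Group G] (H N : Subgroup G) : Prop :=
  N ≤ H ∧ ∀ h ∈ H, ∀ x ∈ N, h * x * h⁻¹ ∈ N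

/-- `N` is a minimal normal subgroup of the subgroup `H`. -/
def MinimalNormalIn {G : Type*} [Group G] (H N : Subgroup G) : Prop :=
  NormalIn H N ∧ N ≠ ⊥ ∧ ∀ M : Subgroup G, NormalIn H M → M ≤ N → M = ⊥ ∨ M = N

/-- The socle of a subgroup `H`: the subgroup generated by the minimal
normal subgroups of `H`. -/
def SocleIn {G : Type*} [Group G] (H : Subgroup G) : Subgroup G :=
  ⨆ N ∈ {N : Subgroup G | MinimalNormalIn H N}, N

/-- The conjugate subgroup `g⁻¹ H g`. -/
def ConjSub {G : Type*} [Group G] (g : G) (H : Subgroup G) : Subgroup G :=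
  Subgroup.map (MulAut.conj g⁻¹).toMonoidHom H

/-- The permutation of an invariant set induced by an element of its setwise stabilizer. -/
def restrictHom {G Y : Type*} [Group G] [MulAction G Y] (A : Set Y) :
    MulAction.stabilizer G A →* Equiv.Perm A where
  toFun g := (MulAction.toPerm (g : G)).subtypePerm (fun y => by
    have hA : (g : G) • A = A := MulAction.mem_stabilizer_iff.mp g.2
    constructor
    · intro hy
      have : (g : G) • y ∈ (g : G) • A := by rw [hA]; exact hy
      exact Set.smul_mem_smul_set_iff.mp this
    · intro hy
      have : (g : G) • y ∈ (g : G) • A := Set.smul_mem_smul_set hy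
      rw [hA] at this; exact this)
  map_one' := by
    ext x
    simp [Equiv.Perm.subtypePerm]
  map_mul' g h := by
    ext x
    simp [Equiv.Perm.subtypePerm, mul_smul]

/-- The permutation group induced on an invariant set `A` by (the setwise stabilizer of `A`
in) a subgroup `H`. -/
def InducedSub {G Y : Type*} [Group G] [MulAction G Y] (H : Subgroup G) (A : Set Y) :
    Subgroup (Equiv.Perm A) :=
  Subgroup.map (restrictHom A) (H.comap (MulAction.stabilizer G A).subtype)

end PermGroupDefs

section ClassR

/-- The class `𝓡` of groups from Definition 1.7. -/
def IsClassRGroup (R : Type*) [Group R] : Prop :=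
  ∃ n : ℕ, 0 < n ∧ Odd n ∧ Squarefree n ∧
    (Nonempty (R ≃* Multiplicative (ZMod n)) ∨
     Nonempty (R ≃* Multiplicative (ZMod n × ZMod 2)) ∨
     Nonempty (R ≃* Multiplicative (ZMod n × ZMod 2 × ZMod 2)) ∨
     Nonempty (R ≃* Multiplicative (ZMod n × ZMod 2 × ZMod 2 × ZMod 2)) ∨
     Nonempty (R ≃* Multiplicative (ZMod n × ZMod 2 × ZMod 2 × ZMod 2 × ZMod 2)) ∨
     Nonempty (R ≃* Multiplicative (ZMod n × ZMod 4)) ∨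
     Nonempty (R ≃* Multiplicative (ZMod n) × QuaternionGroup 2) ∨
     (∃ o : ℕ, (o = 2 ∨ o = 4 ∨ o = 8) ∧
       ∃ ψ : Multiplicative (ZMod o) →* MulAut (Multiplicative (ZMod n)),
         ψ (Multiplicative.ofAdd 1) ≠ 1 ∧ ψ (Multiplicative.ofAdd 1) ^ 2 = 1 ∧
         Nonempty (R ≃* Multiplicative (ZMod n) ⋊[ψ] Multiplicative (ZMod o))))

end ClassR

section CI

/-- `σ` is an isomorphism between the ternary relational structures `R` and `S`. -/
def TernaryIso {X I : Type*} (R S : I → Set (X × X × X)) (σ : Equiv.Perm X) : Prop :=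
  ∀ i, (fun t : X × X × X => (σ t.1, σ t.2.1, σ t.2.2)) '' R i = S i

/-- A ternary relational structure on a group `G` is a Cayley object if all left
translations are automorphisms. -/
def CayleyTernary (G : Type*) [Group G] {I : Type*} (R : I → Set (G × G × G)) : Prop :=
  ∀ g : G, TernaryIso R R (Equiv.mulLeft g)

/-- `G` is a CI-group with respect to ternary relational structures. -/
def IsTernaryCI (G : Type*) [Group G] : Prop :=
  ∀ (I : Type) (R S : I → Set (G × G × G)), CayleyTernary G R → CayleyTernary G S →
    (∃ σ : Equiv.Perm G, TernaryIso R S σ) →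
    ∃ φ : G ≃* G, TernaryIso R S φ.toEquiv

/-- `σ` is an isomorphism between the binary relational structures `R` and `S`. -/
def BinaryIso {X I : Type*} (R S : I → Set (X × X)) (σ : Equiv.Perm X) : Prop :=
  ∀ i, (fun t : X × X => (σ t.1, σ t.2)) '' R i = S i

/-- A binary relational structure on a group `G` is a Cayley object if all left
translations are automorphisms. -/
def CayleyBinary (G : Type*) [Group G] {I : Type*} (R : I → Set (G × G)) : Prop :=
  ∀ g : G, BinaryIso R R (Equiv.mulLeft g)

/-- `G` is a CI-group with respect to binary relational structures. -/
def IsBinaryCI (G : Type*) [Group G] : Prop :=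
  ∀ (I : Type) (R S : I → Set (G × G)), CayleyBinary G R → CayleyBinary G S →
    (∃ σ : Equiv.Perm G, BinaryIso R S σ) →
    ∃ φ : G ≃* G, BinaryIso R S φ.toEquiv

end CI

section Closure

/-- `σ` belongs to the `k`-closure of `G ≤ Sym(Y)`: it preserves every orbit of the
componentwise action of `G` on `Y^k`. -/
def InKClosure {Y : Type*} (k : ℕ) (G : Subgroup (Equiv.Perm Y)) (σ : Equiv.Perm Y) : Prop :=
  ∀ t : Fin k → Y, ∃ g ∈ G, ∀ i, σ (t i) = g (t i)

/-- `G` is `k`-closed. -/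
def IsKClosed {Y : Type*} (k : ℕ) (G : Subgroup (Equiv.Perm Y)) : Prop :=
  ∀ σ : Equiv.Perm Y, InKClosure k G σ → σ ∈ G

/-- The inner holomorph of `G`: the subgroup of `Sym(G)` generated by the left and right
regular representations. -/
def InnerHolomorph (G : Type*) [Group G] : Subgroup (Equiv.Perm G) :=
  Subgroup.closure
    ((Set.range fun g : G => Equiv.mulLeft g) ∪ (Set.range fun g : G => Equiv.mulRight g))

end Closure


section Aux
variable {F : Type*} [Group F] (H : Subgroup F)

def Hg (g : F) : Subgroup F := Subgroup.map (MulAut.conj g).toMonoidHom H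

def KSet : Set F := {x | ∀ g : F, x ∈ Hg H g → x = 1}

lemma mem_Hg {g x : F} : x ∈ Hg H g ↔ g⁻¹ * x * g ∈ H := by
  constructor
  · rintro ⟨h, hh, rfl⟩
    simpa [MulAut.conj_apply, mul_assoc] using hh
  · intro h
    refine ⟨g⁻¹ * x * g, h, ?_⟩
    simp [MulAut.conj_apply]
    group

lemma conj_mem_Hg {g h : F} (hh : h ∈ H) : g * h * g⁻¹ ∈ Hg H g := by
  rw [mem_Hg]
  have e : g⁻¹ * (g * h * g⁻¹) * g = h := by group
  rwa [e]

lemma Hg_eq {a b : F} (hab : a⁻¹ * b ∈ H) : Hg H a = Hg H b := by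
  ext x
  rw [mem_Hg, mem_Hg]
  constructor
  · intro h
    have e : b⁻¹ * x * b = (a⁻¹*b)⁻¹ * (a⁻¹ * x * a) * (a⁻¹*b) := by group
    rw [e]
    exact H.mul_mem (H.mul_mem (H.inv_mem hab) h) hab
  · intro h
    have e : a⁻¹ * x * a = (a⁻¹*b) * (b⁻¹ * x * b) * (a⁻¹*b)⁻¹ := by group
    rw [e]
    exact H.mul_mem (H.mul_mem hab h) (H.inv_mem hab)

lemma not_mem_KSet {x : F} : x ∉ KSet H ↔ ∃ g, x ∈ Hg H g ∧ x ≠ 1 := by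
  simp [KSet]

variable (hfrob : ∀ g : F, g ∉ H → H ⊓ Subgroup.map (MulAut.conj g).toMonoidHom H = ⊥)

include hfrob

lemma mem_of_inter {x g : F} (hx : x ∈ H) (hxg : x ∈ Hg H g) (hx1 : x ≠ 1) : g ∈ H := by
  by_contra hg
  have h1 : x ∈ H ⊓ Subgroup.map (MulAut.conj g).toMonoidHom H := ⟨hx, hxg⟩
  rw [hfrob g hg] at h1
  exact hx1 h1

lemma same_conj {x a b : F} (ha : x ∈ Hg H a) (hb : x ∈ Hg H b) (hx1 : x ≠ 1) :
    a⁻¹ * b ∈ H := by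
  have hy : a⁻¹ * x * a ∈ H := (mem_Hg H).1 ha
  have hy2 : a⁻¹ * x * a ∈ Hg H (a⁻¹ * b) := by
    rw [mem_Hg]
    have e : (a⁻¹*b)⁻¹ * (a⁻¹ * x * a) * (a⁻¹*b) = b⁻¹ * x * b := by group
    rw [e]; exact (mem_Hg H).1 hb
  have hy1 : a⁻¹ * x * a ≠ 1 := by
    intro h
    apply hx1
    have h2 := congrArg (fun t => a * t * a⁻¹) h
    have e1 : a * (a⁻¹ * x * a) * a⁻¹ = x := by group
    have e2 : a * (1:F) * a⁻¹ = 1 := by group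
    rw [e1, e2] at h2
    exact h2
  exact mem_of_inter H hfrob hy hy2 hy1

lemma counting [Finite F] (hcard : 2 < Nat.card ↥H) {z : F} (hz : z ∈ KSet H) :
    ∃ m p q : F, p ∈ Hg H m ∧ q ∈ Hg H m ∧ p ≠ q ∧ p⁻¹ * z ∉ KSet H ∧ q⁻¹ * z ∉ KSet H := by
  classical
  letI : Fintype F := Fintype.ofFinite F
  set c := Fintype.card (F ⧸ H) with hcdef
  set mH := Fintype.card ↥H with hmdef
  have hm3 : 3 ≤ mH := by
    rw [Nat.card_eq_fintype_card] at hcard; omega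
  have hc1 : 1 ≤ c := Fintype.card_pos
  set U : Finset F := Finset.univ.filter (fun x => x ∉ KSet H) with hU
  have hmemU : ∀ x : F, x ∈ U ↔ x ∉ KSet H := by
    intro x; simp [hU]
  -- cardinality of U
  have hUcard : U.card = c * (mH - 1) := by
    have hbij : (Finset.univ : Finset ((F ⧸ H) × {h : ↥H // h ≠ 1})).card = U.card := by
      apply Finset.card_bij (i := fun w _ => w.1.out * (w.2.1 : F) * w.1.out⁻¹)
      · intro w _
        rw [hmemU, not_mem_KSet]
        refine ⟨w.1.out, conj_mem_Hg H w.2.1.2, ?_⟩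
        intro h1
        apply w.2.2
        have : (w.2.1 : F) = 1 := by
          have h2 := congrArg (fun t => w.1.out⁻¹ * t * w.1.out) h1
          have e1 : w.1.out⁻¹ * (w.1.out * (w.2.1:F) * w.1.out⁻¹) * w.1.out = (w.2.1:F) := by
            group
          have e2 : w.1.out⁻¹ * (1:F) * w.1.out = 1 := by group
          rw [e1, e2] at h2
          exact h2
        exact Subtype.ext (by exact_mod_cast this)
      · intro w _ w' _ heq
        have hne : w.1.out * (w.2.1 : F) * w.1.out⁻¹ ≠ 1 := by
          intro h1
          apply w.2.2
          have h2 := congrArg (fun t => w.1.out⁻¹ * t * w.1.out) h1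
          have e1 : w.1.out⁻¹ * (w.1.out * (w.2.1:F) * w.1.out⁻¹) * w.1.out = (w.2.1:F) := by
            group
          have e2 : w.1.out⁻¹ * (1:F) * w.1.out = 1 := by group
          rw [e1, e2] at h2
          exact Subtype.ext (by exact_mod_cast h2)
        have hmem1 : w.1.out * (w.2.1 : F) * w.1.out⁻¹ ∈ Hg H w.1.out :=
          conj_mem_Hg H w.2.1.2
        have hmem2 : w.1.out * (w.2.1 : F) * w.1.out⁻¹ ∈ Hg H w'.1.out := by
          rw [heq]; exact conj_mem_Hg H w'.2.1.2
        have hH := same_conj H hfrob hmem1 hmem2 hne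
        have hq : w.1 = w'.1 := by
          have : (w.1.out : F ⧸ H) = (w'.1.out : F ⧸ H) := (QuotientGroup.eq).2 hH
          rwa [QuotientGroup.out_eq', QuotientGroup.out_eq'] at this
        have ha : w.1.out = w'.1.out := by rw [hq]
        rw [← ha] at heq
        have : (w.2.1 : F) = (w'.2.1 : F) := by
          have := heq
          exact mul_left_cancel (mul_right_cancel this)
        have hsnd : w.2 = w'.2 := Subtype.ext (Subtype.ext this)
        exact Prod.ext hq hsnd
      · intro x hx
        rw [hmemU, not_mem_KSet] at hx
        obtain ⟨g, hxg, hx1⟩ := hx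
        have hout : ((⟦g⟧ : F ⧸ H).out : F ⧸ H) = ⟦g⟧ := QuotientGroup.out_eq' _
        have hgH : (⟦g⟧ : F ⧸ H).out⁻¹ * g ∈ H := (QuotientGroup.eq).1 hout
        have hx2 : x ∈ Hg H (⟦g⟧ : F ⧸ H).out := by
          rw [Hg_eq H hgH]; exact hxg
        set a := (⟦g⟧ : F ⧸ H).out with hadef
        have hmem : a⁻¹ * x * a ∈ H := (mem_Hg H).1 hx2
        have hne : a⁻¹ * x * a ≠ 1 := by
          intro h1
          apply hx1
          have h2 := congrArg (fun t => a * t * a⁻¹) h1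
          have e1 : a * (a⁻¹ * x * a) * a⁻¹ = x := by group
          have e2 : a * (1:F) * a⁻¹ = 1 := by group
          rw [e1, e2] at h2
          exact h2
        refine ⟨⟨⟦g⟧, ⟨⟨a⁻¹ * x * a, hmem⟩, ?_⟩⟩, Finset.mem_univ _, ?_⟩
        · intro h1
          apply hne
          have h2 := congrArg Subtype.val h1
          simpa using h2
        · show a * (a⁻¹ * x * a) * a⁻¹ = x
          group
    have hprod : (Finset.univ : Finset ((F ⧸ H) × {h : ↥H // h ≠ 1})).card = c * (mH - 1) := by
      rw [Finset.card_univ, Fintype.card_prod]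
      congr 1
      calc Fintype.card {h : ↥H // h ≠ 1}
          = Fintype.card ↥H - Fintype.card {h : ↥H // h = 1} := Fintype.card_subtype_compl _
        _ = mH - 1 := by rw [Fintype.card_subtype_eq]
    omega
  -- the kernel-set finset
  have hgex : ∀ x : F, x ∉ KSet H → ∃ g, x ∈ Hg H g ∧ x ≠ 1 := fun x hx => (not_mem_KSet H).1 hx
  set Kf : Finset F := Finset.univ.filter (fun x => x ∈ KSet H) with hKf
  have hsplit : Kf.card + U.card = Fintype.card F := by
    have h := Finset.card_filter_add_card_filter_not
      (s := (Finset.univ : Finset F)) (p := fun x => x ∈ KSet H)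
    simpa [hKf, hU, Finset.card_univ] using h
  have hFcard : Fintype.card F = c * mH := by
    have h := Subgroup.card_eq_card_quotient_mul_card_subgroup (s := H)
    simpa [Nat.card_eq_fintype_card] using h
  have hmul : c * mH = c * (mH - 1) + c := by
    have e : mH - 1 + 1 = mH := by omega
    calc c * mH = c * (mH - 1 + 1) := by rw [e]
      _ = c * (mH - 1) + c := by rw [Nat.mul_succ]
  have hKcard : Kf.card = c := by omega
  set Bad : Finset F := U.filter (fun p => p⁻¹ * z ∈ KSet H) with hBad
  set Good : Finset F := U.filter (fun p => p⁻¹ * z ∉ KSet H) with hGood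
  have hGB : Bad.card + Good.card = U.card :=
    Finset.card_filter_add_card_filter_not (s := U) (p := fun p => p⁻¹ * z ∈ KSet H)
  have h1K : (1:F) ∈ Kf := by
    simp only [hKf, Finset.mem_filter, Finset.mem_univ, true_and]
    intro g _
    rfl
  have hBadlt : Bad.card < c := by
    have hle : Bad.card ≤ (Kf.erase 1).card := by
      apply Finset.card_le_card_of_injOn (fun p => p⁻¹ * z)
      · intro p hp
        rw [hBad, Finset.mem_coe, Finset.mem_filter] at hp
        rw [Finset.mem_coe, Finset.mem_erase]
        refine ⟨?_, ?_⟩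
        · intro h1
          have hpz : p = z := by
            have := inv_mul_eq_one.1 h1
            exact this
          have hpK : p ∉ KSet H := (hmemU p).1 hp.1
          rw [hpz] at hpK
          exact hpK hz
        · simp only [hKf, Finset.mem_filter, Finset.mem_univ, true_and]
          exact hp.2
      · intro p hp q hq h
        have h2 : p⁻¹ = q⁻¹ := mul_right_cancel h
        exact inv_injective h2
    have he : (Kf.erase 1).card = Kf.card - 1 := Finset.card_erase_of_mem h1K
    omega
  have hGoodgt : c < Good.card := by
    have h2 : c * 2 ≤ c * (mH - 1) := Nat.mul_le_mul_left c (by omega)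
    omega
  set f : F → F ⧸ H :=
    fun x => if hx : x ∈ KSet H then (QuotientGroup.mk 1 : F ⧸ H) else QuotientGroup.mk (hgex x hx).choose
    with hf
  have hmaps : ∀ p ∈ Good, f p ∈ (Finset.univ : Finset (F ⧸ H)) := fun p _ => Finset.mem_univ _
  have hlt : (Finset.univ : Finset (F ⧸ H)).card < Good.card := by
    rw [Finset.card_univ]; exact hGoodgt
  obtain ⟨p, hp, q, hq, hpq, hfeq⟩ := Finset.exists_ne_map_eq_of_card_lt_of_maps_to hlt hmaps
  rw [hGood, Finset.mem_filter] at hp hq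
  have hpU : p ∉ KSet H := (hmemU p).1 hp.1
  have hqU : q ∉ KSet H := (hmemU q).1 hq.1
  rw [hf] at hfeq
  simp only [dif_neg hpU, dif_neg hqU] at hfeq
  obtain ⟨hpHg, -⟩ := (hgex p hpU).choose_spec
  obtain ⟨hqHg, -⟩ := (hgex q hqU).choose_spec
  have hHmem := (QuotientGroup.eq).1 hfeq
  refine ⟨(hgex p hpU).choose, p, q, hpHg, ?_, hpq, hp.2, hq.2⟩
  rw [Hg_eq H hHmem]
  exact hqHg

end Aux

section MainAux
variable {F : Type*} [Group F] (H : Subgroup F)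

lemma Hg_one : Hg H 1 = H := by
  ext x; rw [mem_Hg]; simp

lemma conj_Hg {g c x : F} (hx : x ∈ Hg H g) : c * x * c⁻¹ ∈ Hg H (c * g) := by
  rw [mem_Hg] at hx ⊢
  have e : (c * g)⁻¹ * (c * x * c⁻¹) * (c * g) = g⁻¹ * x * g := by group
  rwa [e]

lemma hcomm_of (habelian : ∀ a b : ↥H, a * b = b * a) :
    ∀ a b : F, a ∈ H → b ∈ H → a * b = b * a := by
  intro a b ha hb
  exact congrArg Subtype.val (habelian ⟨a, ha⟩ ⟨b, hb⟩)

lemma comm_Hg (habelian : ∀ a b : ↥H, a * b = b * a) {g x y : F}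
    (hx : x ∈ Hg H g) (hy : y ∈ Hg H g) : x * y = y * x := by
  rw [mem_Hg] at hx hy
  have h := hcomm_of H habelian _ _ hx hy
  calc x * y = g * ((g⁻¹ * x * g) * (g⁻¹ * y * g)) * g⁻¹ := by group
    _ = g * ((g⁻¹ * y * g) * (g⁻¹ * x * g)) * g⁻¹ := by rw [h]
    _ = y * x := by group

variable (hfrob : ∀ g : F, g ∉ H → H ⊓ Subgroup.map (MulAut.conj g).toMonoidHom H = ⊥)
include hfrob

lemma cent_mem {x g c : F} (hx : x ∈ Hg H g) (hx1 : x ≠ 1) (hc : c * x = x * c) :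
    c ∈ Hg H g := by
  have h2 : x ∈ Hg H (c * g) := by
    rw [mem_Hg] at hx ⊢
    have e1 : (c*g)⁻¹ * x * (c*g) = g⁻¹ * (c⁻¹ * x * c) * g := by group
    rw [e1]
    have e2 : c⁻¹ * x * c = x := by
      calc c⁻¹ * x * c = c⁻¹ * (x * c) := by group
        _ = c⁻¹ * (c * x) := by rw [← hc]
        _ = x := by group
    rwa [e2]
  have h3 := same_conj H hfrob hx h2 hx1
  rw [mem_Hg]
  have e : g⁻¹ * (c * g) = g⁻¹ * c * g := by group
  rwa [e] at h3

end MainAux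

lemma innerHol_form {G : Type*} [Group G] {π : Equiv.Perm G} (hπ : π ∈ InnerHolomorph G) :
    ∃ a b : G, ∀ x, π x = a * x * b := by
  induction hπ using Subgroup.closure_induction with
  | mem π hπ =>
    rcases hπ with ⟨g, rfl⟩ | ⟨g, rfl⟩
    · exact ⟨g, 1, fun x => by simp⟩
    · exact ⟨1, g, fun x => by simp⟩
  | one => exact ⟨1, 1, fun x => by simp⟩
  | mul π₁ π₂ h₁ h₂ ih₁ ih₂ =>
    obtain ⟨a₁, b₁, e₁⟩ := ih₁
    obtain ⟨a₂, b₂, e₂⟩ := ih₂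
    refine ⟨a₁ * a₂, b₂ * b₁, fun x => ?_⟩
    have e : (π₁ * π₂) x = π₁ (π₂ x) := rfl
    rw [e, e₂, e₁]
    group
  | inv π hmem ih =>
    obtain ⟨a, b, e⟩ := ih
    refine ⟨a⁻¹, b⁻¹, fun x => ?_⟩
    have h : π (a⁻¹ * x * b⁻¹) = x := by rw [e]; group
    conv_lhs => rw [← h]
    exact Equiv.symm_apply_apply π _

lemma mulLeft_mem_innerHol {G : Type*} [Group G] (a : G) :
    Equiv.mulLeft a ∈ InnerHolomorph G :=
  Subgroup.subset_closure (Set.mem_union_left _ ⟨a, rfl⟩)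

lemma mulRight_mem_innerHol {G : Type*} [Group G] (a : G) :
    Equiv.mulRight a ∈ InnerHolomorph G :=
  Subgroup.subset_closure (Set.mem_union_right _ ⟨a, rfl⟩)

/-- (Proposition 7.1) -/
theorem statement16 (F : Type*) [Group F] [Finite F] (H : Subgroup F)
    (habelian : ∀ a b : ↥H, a * b = b * a) (hcard : 2 < Nat.card ↥H)
    (hbot : H ≠ ⊥) (htop : H ≠ ⊤)
    (hfrob : ∀ g : F, g ∉ H → H ⊓ Subgroup.map (MulAut.conj g).toMonoidHom H = ⊥)
    (h2closed : IsKClosed 2 (MulAction.toPermHom F (F ⧸ H)).range) :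
    IsKClosed 3 (InnerHolomorph F) := by
  classical
  intro σ hσ
  have hcomm := hcomm_of H habelian
  obtain ⟨h₀s, hh₀s⟩ := Subgroup.ne_bot_iff_exists_ne_one.1 hbot
  set h₀ : F := (h₀s : F) with hh₀def
  have hh₀H : h₀ ∈ H := h₀s.2
  have hh₀1 : h₀ ≠ 1 := by
    intro h
    exact hh₀s (Subtype.ext h)
  -- triple property for σ
  have h3 : ∀ x y w : F, ∃ a b : F, σ x = a * x * b ∧ σ y = a * y * b ∧ σ w = a * w * b := by
    intro x y w
    obtain ⟨g, hg, hag⟩ := hσ ![x, y, w]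
    obtain ⟨a, b, hab⟩ := innerHol_form hg
    have e0 := hag 0
    have e1 := hag 1
    have e2 := hag 2
    simp only [Matrix.cons_val_zero, Matrix.cons_val_one, Matrix.head_cons,
      Matrix.cons_val_two, Matrix.tail_cons] at e0 e1 e2
    refine ⟨a, b, ?_, ?_, ?_⟩
    · rw [e0, hab]
    · rw [e1, hab]
    · rw [e2, hab]
  set c0 : F := σ 1 with hc0
  set τ : F → F := fun x => c0⁻¹ * σ x with hτdef
  have hτ1 : τ 1 = 1 := by simp [hτdef, hc0]
  have hτ3 : ∀ x y w : F, ∃ a b : F, τ x = a * x * b ∧ τ y = a * y * b ∧ τ w = a * w * b := by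
    intro x y w
    obtain ⟨a, b, e1, e2, e3⟩ := h3 x y w
    exact ⟨c0⁻¹ * a, b, by simp [hτdef, e1, mul_assoc], by simp [hτdef, e2, mul_assoc],
      by simp [hτdef, e3, mul_assoc]⟩
  have hτ2 : ∀ x y : F, ∃ a : F, τ x = a * x * a⁻¹ ∧ τ y = a * y * a⁻¹ := by
    intro x y
    obtain ⟨a, b, e1, e2, e3⟩ := hτ3 x y 1
    have hb : b = a⁻¹ := by
      have h1 : a * 1 * b = 1 := by rw [← e3]; exact hτ1
      calc b = a⁻¹ * (a * 1 * b) := by group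
        _ = a⁻¹ := by rw [h1]; group
    rw [hb] at e1 e2
    exact ⟨a, e1, e2⟩
  have hτinj : Function.Injective τ := by
    intro x y h
    apply σ.injective
    exact mul_left_cancel h
  have hτne1 : ∀ x : F, x ≠ 1 → τ x ≠ 1 := by
    intro x hx h
    exact hx (hτinj (h.trans hτ1.symm))
  -- the conjugating element function
  obtain ⟨A, hA1, hA2⟩ : ∃ A : F → F → F, (∀ x y, τ x = A x y * x * (A x y)⁻¹) ∧
      (∀ x y, τ y = A x y * y * (A x y)⁻¹) :=
    ⟨fun x y => (hτ2 x y).choose, fun x y => (hτ2 x y).choose_spec.1,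
      fun x y => (hτ2 x y).choose_spec.2⟩
  set xg : F → F := fun g => g * h₀ * g⁻¹ with hxgdef
  have hxg_ne1 : ∀ g : F, xg g ≠ 1 := by
    intro g h
    apply hh₀1
    have h2 := congrArg (fun t => g⁻¹ * t * g) h
    simp only [hxgdef] at h2
    have e1 : g⁻¹ * (g * h₀ * g⁻¹) * g = h₀ := by group
    have e2 : g⁻¹ * (1:F) * g = 1 := by group
    rw [e1, e2] at h2
    exact h2
  set abar : F → F := fun g => A (xg g) (xg g) with habardef
  set sbar : F ⧸ H → F ⧸ H :=
    fun qq => QuotientGroup.mk (abar qq.out * qq.out) with hsbardef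
  -- key property of sbar
  have hbar : ∀ g b : F, τ (xg g) = b * xg g * b⁻¹ →
      sbar (QuotientGroup.mk g) = QuotientGroup.mk (b * g) := by
    intro g b hb
    set r : F := (QuotientGroup.mk g : F ⧸ H).out with hrdef
    have hrg : r⁻¹ * g ∈ H := (QuotientGroup.eq).1 (QuotientGroup.out_eq' _)
    have hxgr : xg r = xg g := by
      show r * h₀ * r⁻¹ = g * h₀ * g⁻¹
      have hk : g = r * (r⁻¹ * g) := by group
      have hkh := hcomm _ _ hrg hh₀H
      have hkc : (r⁻¹*g) * h₀ * (r⁻¹*g)⁻¹ = h₀ := by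
        rw [hkh]; group
      calc r * h₀ * r⁻¹ = r * ((r⁻¹*g) * h₀ * (r⁻¹*g)⁻¹) * r⁻¹ := by rw [hkc]
        _ = (r * (r⁻¹*g)) * h₀ * (r * (r⁻¹*g))⁻¹ := by group
        _ = g * h₀ * g⁻¹ := by rw [← hk]
    have habar_eq : abar r = abar g := by
      simp only [habardef]
      rw [hxgr]
    have hτr' : τ (xg g) = abar r * xg g * (abar r)⁻¹ := by
      rw [habar_eq]
      exact hA1 (xg g) (xg g)
    have hne : τ (xg g) ≠ 1 := hτne1 _ (hxg_ne1 g)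
    have hmem1 : τ (xg g) ∈ Hg H (abar r * g) := by
      rw [hτr']
      have e : abar r * xg g * (abar r)⁻¹ = (abar r * g) * h₀ * (abar r * g)⁻¹ := by
        simp only [hxgdef]; group
      rw [e]
      exact conj_mem_Hg H hh₀H
    have hmem2 : τ (xg g) ∈ Hg H (b * g) := by
      rw [hb]
      have e : b * xg g * b⁻¹ = (b * g) * h₀ * (b * g)⁻¹ := by
        simp only [hxgdef]; group
      rw [e]
      exact conj_mem_Hg H hh₀H
    have hsc := same_conj H hfrob hmem1 hmem2 hne
    have heq1 : (QuotientGroup.mk (abar r * g) : F ⧸ H) = QuotientGroup.mk (b * g) :=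
      (QuotientGroup.eq).2 hsc
    have heq2 : (QuotientGroup.mk (abar r * r) : F ⧸ H) = QuotientGroup.mk (abar r * g) := by
      apply (QuotientGroup.eq).2
      have e : (abar r * r)⁻¹ * (abar r * g) = r⁻¹ * g := by group
      rwa [e]
    calc sbar (QuotientGroup.mk g) = QuotientGroup.mk (abar r * r) := rfl
      _ = QuotientGroup.mk (abar r * g) := heq2
      _ = QuotientGroup.mk (b * g) := heq1
  -- sbar is bijective
  have hsbar_inj : Function.Injective sbar := by
    intro q1 q2 h
    obtain ⟨aa, e1, e2⟩ := hτ2 (xg q1.out) (xg q2.out)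
    have hb1 := hbar q1.out aa e1
    have hb2 := hbar q2.out aa e2
    rw [QuotientGroup.out_eq'] at hb1 hb2
    rw [hb1, hb2] at h
    have hmem := (QuotientGroup.eq).1 h
    have e : (aa * q1.out)⁻¹ * (aa * q2.out) = q1.out⁻¹ * q2.out := by group
    rw [e] at hmem
    have := (QuotientGroup.eq).2 hmem
    rwa [QuotientGroup.out_eq', QuotientGroup.out_eq'] at this
  have hsbar_bij : Function.Bijective sbar := Finite.injective_iff_bijective.1 hsbar_inj
  set sperm : Equiv.Perm (F ⧸ H) := Equiv.ofBijective sbar hsbar_bij with hspermdef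
  have hsperm_apply : ∀ q, sperm q = sbar q := fun q => rfl
  have hin2 : InKClosure 2 (MulAction.toPermHom F (F ⧸ H)).range sperm := by
    intro t
    obtain ⟨bb, hb1, hb2⟩ := hτ2 (xg (t 0).out) (xg (t 1).out)
    refine ⟨MulAction.toPermHom F (F ⧸ H) bb, ⟨bb, rfl⟩, ?_⟩
    have key : ∀ q : F ⧸ H, τ (xg q.out) = bb * xg q.out * bb⁻¹ →
        sperm q = (MulAction.toPermHom F (F ⧸ H) bb) q := by
      intro q hq
      have := hbar q.out bb hq
      rw [QuotientGroup.out_eq'] at this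
      rw [hsperm_apply, this]
      show QuotientGroup.mk (bb * q.out) = bb • q
      conv_rhs => rw [← QuotientGroup.out_eq' q]
      rfl
    intro i
    fin_cases i
    · exact key (t 0) hb1
    · exact key (t 1) hb2
  obtain ⟨d, hd⟩ := h2closed sperm hin2
  have hdq : ∀ g : F, (QuotientGroup.mk (d * g) : F ⧸ H) = sbar (QuotientGroup.mk g) := by
    intro g
    have h1 := Equiv.ext_iff.1 hd (QuotientGroup.mk g)
    rw [hsperm_apply] at h1
    rw [← h1]
    rfl
  -- the normalized permutation ρ
  set ρ : F → F := fun x => d⁻¹ * τ x * d with hρdef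
  have hρ1 : ρ 1 = 1 := by simp [hρdef, hτ1]
  have hρ2 : ∀ x y : F, ∃ a : F, ρ x = a * x * a⁻¹ ∧ ρ y = a * y * a⁻¹ := by
    intro x y
    obtain ⟨a, e1, e2⟩ := hτ2 x y
    refine ⟨d⁻¹ * a, ?_, ?_⟩
    · simp only [hρdef, e1]; group
    · simp only [hρdef, e2]; group
  have hρ3 : ∀ x y w : F, ∃ a b : F, ρ x = a * x * b ∧ ρ y = a * y * b ∧ ρ w = a * w * b := by
    intro x y w
    obtain ⟨a, b, e1, e2, e3⟩ := hτ3 x y w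
    refine ⟨d⁻¹ * a, b * d, ?_, ?_, ?_⟩ <;>
      simp only [hρdef, e1, e2, e3] <;> group
  have hρne1 : ∀ x : F, x ≠ 1 → ρ x ≠ 1 := by
    intro x hx h
    apply hτne1 x hx
    have : τ x = d * 1 * d⁻¹ := by
      rw [← h]; simp only [hρdef]; group
    simpa using this
  have hρfix0 : ∀ g h : F, h ∈ H → h ≠ 1 → ρ (g * h * g⁻¹) ∈ Hg H g ∧ ρ (g * h * g⁻¹) ≠ 1 := by
    intro g h hh h1
    obtain ⟨a, ha1, ha2⟩ := hτ2 (xg g) (g * h * g⁻¹)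
    have hb := hbar g a ha1
    have heq : (QuotientGroup.mk (d * g) : F ⧸ H) = QuotientGroup.mk (a * g) :=
      (hdq g).trans hb
    have hHgeq : Hg H (d * g) = Hg H (a * g) := Hg_eq H ((QuotientGroup.eq).1 heq)
    have hmem : τ (g * h * g⁻¹) ∈ Hg H (a * g) := by
      rw [ha2]
      have e : a * (g * h * g⁻¹) * a⁻¹ = (a * g) * h * (a * g)⁻¹ := by group
      rw [e]
      exact conj_mem_Hg H hh
    rw [← hHgeq] at hmem
    constructor
    · have h2 := conj_Hg H (c := d⁻¹) hmem
      have e : d⁻¹ * (d * g) = g := by group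
      rw [e] at h2
      simpa only [hρdef, inv_inv] using h2
    · apply hρne1
      intro hc
      apply h1
      have h2 := congrArg (fun t => g⁻¹ * t * g) hc
      have e1 : g⁻¹ * (g * h * g⁻¹) * g = h := by group
      have e2 : g⁻¹ * (1:F) * g = 1 := by group
      rw [e1, e2] at h2
      exact h2
  -- ρ fixes H pointwise
  have hρH : ∀ x : F, x ∈ H → ρ x = x := by
    intro x hx
    by_cases hx1 : x = 1
    · rw [hx1, hρ1]
    obtain ⟨a, ha, -⟩ := hρ2 x x
    have hmem0 := hρfix0 1 x hx hx1
    rw [show (1:F) * x * (1:F)⁻¹ = x by group] at hmem0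
    have hmema : ρ x ∈ Hg H a := by
      rw [ha]; exact conj_mem_Hg H hx
    have haH : a ∈ H := by
      have hsc := same_conj H hfrob hmem0.1 hmema hmem0.2
      rwa [show (1:F)⁻¹ * a = a by group] at hsc
    rw [ha]
    have hca := hcomm a x haH hx
    calc a * x * a⁻¹ = (a * x) * a⁻¹ := by group
      _ = (x * a) * a⁻¹ := by rw [hca]
      _ = x := by group
  -- ρ fixes all conjugates of H pointwise
  have hρU : ∀ g h : F, h ∈ H → ρ (g * h * g⁻¹) = g * h * g⁻¹ := by
    intro g h hh
    by_cases h1 : h = 1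
    · rw [h1]; rw [show g * (1:F) * g⁻¹ = 1 by group]; exact hρ1
    by_cases hgH : g ∈ H
    · exact hρH _ (H.mul_mem (H.mul_mem hgH hh) (H.inv_mem hgH))
    obtain ⟨a, ha, hah⟩ := hρ2 (g * h * g⁻¹) h₀
    have hfix := hρfix0 g h hh h1
    have hρh₀ : ρ h₀ = h₀ := hρH h₀ hh₀H
    have hcomm_a : a * h₀ = h₀ * a := by
      have hcc : a * h₀ * a⁻¹ = h₀ := by rw [← hah, hρh₀]
      calc a * h₀ = (a * h₀ * a⁻¹) * a := by group
        _ = h₀ * a := by rw [hcc]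
    have hh₀Hg1 : h₀ ∈ Hg H 1 := by rw [Hg_one]; exact hh₀H
    have haHg1 := cent_mem H hfrob hh₀Hg1 hh₀1 hcomm_a
    have haH : a ∈ H := by rwa [Hg_one] at haHg1
    have hmema : ρ (g * h * g⁻¹) ∈ Hg H (a * g) := by
      rw [ha]
      have e : a * (g * h * g⁻¹) * a⁻¹ = (a * g) * h * (a * g)⁻¹ := by group
      rw [e]
      exact conj_mem_Hg H hh
    have hsc := same_conj H hfrob hfix.1 hmema hfix.2
    have haHgg : a ∈ Hg H g := by
      rw [mem_Hg]
      have e : g⁻¹ * a * g = g⁻¹ * (a * g) := by group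
      rwa [e]
    have hbot2 : a ∈ H ⊓ Subgroup.map (MulAut.conj g).toMonoidHom H := ⟨haH, haHgg⟩
    rw [hfrob g hgH] at hbot2
    have ha1 : a = 1 := hbot2
    rw [ha, ha1]
    group
  have hρNotK : ∀ x : F, x ∉ KSet H → ρ x = x := by
    intro x hx
    obtain ⟨g, hxg, hx1⟩ := (not_mem_KSet H).1 hx
    have hm : g⁻¹ * x * g ∈ H := (mem_Hg H).1 hxg
    have e : g * (g⁻¹ * x * g) * g⁻¹ = x := by group
    rw [← e]
    exact hρU g _ hm
  -- ρ fixes the kernel pointwise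
  have hρK : ∀ z : F, z ∈ KSet H → ρ z = z := by
    intro z hzK
    by_contra hne
    obtain ⟨m, p, q, hpm, hqm, hpq, hpz, hqz⟩ := counting H hfrob hcard hzK
    obtain ⟨a, b, e1, e2, e3⟩ := hρ3 (p⁻¹ * z) (q⁻¹ * z) z
    rw [hρNotK _ hpz] at e1
    rw [hρNotK _ hqz] at e2
    -- e1 : p⁻¹ * z = a * (p⁻¹*z) * b
    have hb : b = (p⁻¹*z)⁻¹ * a⁻¹ * (p⁻¹*z) := by
      calc b = (a*(p⁻¹*z))⁻¹ * (a*(p⁻¹*z)*b) := by group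
        _ = (a*(p⁻¹*z))⁻¹ * (p⁻¹*z) := by rw [show a*(p⁻¹*z)*b = a*((p⁻¹*z))*b by group, ← e1]
        _ = (p⁻¹*z)⁻¹ * a⁻¹ * (p⁻¹*z) := by group
    have h2' : q⁻¹*z = a*(q⁻¹*z)*((p⁻¹*z)⁻¹ * a⁻¹ * (p⁻¹*z)) := by
      rw [← hb]; exact e2
    have hstep : (q⁻¹*z)*(p⁻¹*z)⁻¹ = a * ((q⁻¹*z)*(p⁻¹*z)⁻¹) * a⁻¹ := by
      conv_lhs => rw [h2']
      group
    have hvu : (q⁻¹*z)*(p⁻¹*z)⁻¹ = q⁻¹*p := by group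
    rw [hvu] at hstep
    have hw : a * (q⁻¹*p) = (q⁻¹*p) * a := by
      calc a * (q⁻¹*p) = (a * (q⁻¹*p) * a⁻¹) * a := by group
        _ = (q⁻¹*p) * a := by rw [← hstep]
    have hwHg : q⁻¹*p ∈ Hg H m := (Hg H m).mul_mem ((Hg H m).inv_mem hqm) hpm
    have hwne : q⁻¹*p ≠ 1 := by
      intro h
      exact hpq (inv_mul_eq_one.1 h).symm
    have haHg := cent_mem H hfrob hwHg hwne hw
    have hap : a * p = p * a := comm_Hg H habelian haHg hpm
    apply hne
    rw [e3, hb]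
    calc a * z * ((p⁻¹*z)⁻¹ * a⁻¹ * (p⁻¹*z)) = (a*p) * (a⁻¹*(p⁻¹*z)) := by group
      _ = (p*a) * (a⁻¹*(p⁻¹*z)) := by rw [hap]
      _ = z := by group
  -- conclusion
  have hρid : ∀ x : F, ρ x = x := by
    intro x
    by_cases hx : x ∈ KSet H
    · exact hρK x hx
    · exact hρNotK x hx
  have hσx : ∀ x : F, σ x = (c0 * d) * (x * d⁻¹) := by
    intro x
    have h := hρid x
    simp only [hρdef, hτdef] at h
    conv_rhs => rw [← h]
    group
  have hfinal : σ = Equiv.mulLeft (c0 * d) * Equiv.mulRight d⁻¹ := by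
    ext x
    rw [hσx x]
    rfl
  rw [hfinal]
  exact Subgroup.mul_mem _ (mulLeft_mem_innerHol _) (mulRight_mem_innerHol _)
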